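/- arXiv:math/0701300 — 6 statements merged into one kernel-verified Lean document; each statement's English description precedes it below -/
import Mathlib

section
/- Let θ be irrational and M a positive integer. Write the incoming partition P^in_θ(M) = (a₁,…,a_k). Then ∑_{i=1}^k ⌈aᵢθ⌉ = ⌈Mθ⌉. -/
open scoped Classical
open Finset

/-- The next (largest) entry of the incoming partition: the largest `a ∈ {1,…,M}`
such that `⌈aθ⌉/a < ⌈a'θ⌉/a'` for all `a' ∈ {1,…,a−1}`. -/
noncomputable def pinStep (θ : ℝ) (M : ℕ) : ℕ :=
  WithBot.unbotD 0 (((Finset.Icc 1 M).filter (fun a : ℕ => ∀ a' ∈ Finset.Ico 1 a,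
      ((⌈(a : ℝ) * θ⌉ : ℤ) : ℝ) / (a : ℝ) < ((⌈(a' : ℝ) * θ⌉ : ℤ) : ℝ) / (a' : ℝ))).max)

/-- Fuel-based recursion computing the incoming partition `P^in_θ(M)`. -/
noncomputable def pinListAux (θ : ℝ) : ℕ → ℕ → List ℕ
  | 0, _ => []
  | fuel + 1, M =>
      if M = 0 then [] else pinStep θ M :: pinListAux θ fuel (M - pinStep θ M)

/-- The incoming partition `P^in_θ(M)`, listed in the order produced by the recursion
(which is nonincreasing). -/
noncomputable def pinList (θ : ℝ) (M : ℕ) : List ℕ := pinListAux θ M M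

/-- The outgoing partition `P^out_θ(M) := P^in_{−θ}(M)`. -/
noncomputable def poutList (θ : ℝ) (M : ℕ) : List ℕ := pinList (-θ) M

/-!
With `g(n) = ⌈nθ⌉ - nθ ∈ [0, 1)` (`ceilGap θ n`), `⌈(m + k)θ⌉ = ⌈mθ⌉ + ⌈kθ⌉` as soon as
`g(m) ≤ g(m + k)`, and `⌈nθ⌉ / n = θ + g(n) / n`, so `S_θ` is the set of strict prefix minima of `g(n) / n`.
The greatest `a ∈ S_θ` with `a ≤ M` minimises `g` on `[a, M]`: an element of `S_θ` has smaller `g`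
than everything before it, and a non-member `n` has some earlier `m` with `g(m)/m ≤ g(n)/n`,
hence `g(m) ≤ g(n)`. So `⌈Mθ⌉ = ⌈aθ⌉ + ⌈(M - a)θ⌉`, and the claim follows along the recursion.
-/

theorem Int.ceil_add_eq_of_sub_le {R : Type*} [Ring R] [LinearOrder R] [FloorRing R]
    [IsOrderedRing R] {x y : R} (h : ⌈x⌉ - x ≤ ⌈x + y⌉ - (x + y)) :
    ⌈x + y⌉ = ⌈x⌉ + ⌈y⌉ := by
  refine le_antisymm (Int.ceil_add_le x y) ?_
  have hy : ⌈y⌉ ≤ ⌈x + y⌉ - ⌈x⌉ := Int.ceil_le.mpr <| by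
    rw [Int.cast_sub, ← sub_nonneg,
      show (⌈x + y⌉ : R) - ⌈x⌉ - y = (⌈x + y⌉ - (x + y)) - (⌈x⌉ - x) by abel]
    exact sub_nonneg.mpr h
  omega

namespace PinIn

variable {θ : ℝ}

noncomputable def ceilGap (θ : ℝ) (n : ℕ) : ℝ := ⌈(n : ℝ) * θ⌉ - n * θ

lemma ceilGap_nonneg (θ : ℝ) (n : ℕ) : 0 ≤ ceilGap θ n :=
  sub_nonneg.mpr (Int.le_ceil _)

lemma ceil_mul_div_eq (θ : ℝ) {n : ℕ} (hn : n ≠ 0) :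
    ((⌈(n : ℝ) * θ⌉ : ℤ) : ℝ) / n = θ + ceilGap θ n / n := by
  have : (n : ℝ) ≠ 0 := Nat.cast_ne_zero.mpr hn
  field_simp
  simp only [ceilGap]
  ring

lemma ceil_mul_eq_add_of_ceilGap_le {m n : ℕ} (hmn : m ≤ n) (h : ceilGap θ m ≤ ceilGap θ n) :
    ⌈(n : ℝ) * θ⌉ = ⌈(m : ℝ) * θ⌉ + ⌈((n - m : ℕ) : ℝ) * θ⌉ := by
  have hsplit : (n : ℝ) * θ = m * θ + ((n - m : ℕ) : ℝ) * θ := by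
    push_cast [Nat.cast_sub hmn]; ring
  rw [hsplit]
  exact Int.ceil_add_eq_of_sub_le (hsplit ▸ h)

lemma ceilGap_sub_of_le {m n : ℕ} (hmn : m ≤ n) (h : ceilGap θ m ≤ ceilGap θ n) :
    ceilGap θ (n - m) = ceilGap θ n - ceilGap θ m := by
  have hceil := congrArg (fun z : ℤ => (z : ℝ)) (ceil_mul_eq_add_of_ceilGap_le hmn h)
  simp only [ceilGap, Int.cast_add] at hceil ⊢
  push_cast [Nat.cast_sub hmn] at hceil ⊢
  linarith

/-- Membership `a ∈ S_θ`, in the form used by `pinStep`. -/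
def IsCeilRecord (θ : ℝ) (a : ℕ) : Prop :=
  ∀ a' ∈ Finset.Ico 1 a,
    ((⌈(a : ℝ) * θ⌉ : ℤ) : ℝ) / (a : ℝ) < ((⌈(a' : ℝ) * θ⌉ : ℤ) : ℝ) / (a' : ℝ)

lemma isCeilRecord_iff {a : ℕ} (ha : a ≠ 0) :
    IsCeilRecord θ a ↔ ∀ m ∈ Finset.Ico 1 a, ceilGap θ a / a < ceilGap θ m / m := by
  refine forall₂_congr fun m hm => ?_
  have hm : m ≠ 0 := by rw [Finset.mem_Ico] at hm; omega
  rw [ceil_mul_div_eq θ ha, ceil_mul_div_eq θ hm, add_lt_add_iff_left]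

/-- If some `m < a` had a smaller defect, the defects of `m` and `a - m` would add up to that
of `a`, and one of them would have a ratio at most `ceilGap θ a / a`. -/
lemma IsCeilRecord.ceilGap_le {a m : ℕ} (hrec : IsCeilRecord θ a) (hm : m ∈ Finset.Ico 1 a) :
    ceilGap θ a ≤ ceilGap θ m := by
  obtain ⟨hm1, hma⟩ := Finset.mem_Ico.mp hm
  by_contra! hlt
  have hgap := ceilGap_sub_of_le hma.le hlt.le
  rw [isCeilRecord_iff (by omega)] at hrec
  have h₁ := hrec m hm
  have h₂ := hrec (a - m) (Finset.mem_Ico.mpr ⟨by omega, by omega⟩)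
  have hmR : (0 : ℝ) < m := by exact_mod_cast hm1
  have hamR : (0 : ℝ) < ((a - m : ℕ) : ℝ) := by exact_mod_cast (by omega : 0 < a - m)
  have haR : (a : ℝ) = m + ((a - m : ℕ) : ℝ) := by push_cast [Nat.cast_sub hma.le]; ring
  rw [div_lt_div_iff₀ (by linarith) hmR] at h₁
  rw [div_lt_div_iff₀ (by linarith) hamR, hgap] at h₂
  rw [haR] at h₁ h₂
  nlinarith

lemma ceilGap_le_of_isGreatest {a M : ℕ}
    (ha : IsGreatest {b | b ∈ Finset.Icc 1 M ∧ IsCeilRecord θ b} a) :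
    ∀ n, a ≤ n → n ≤ M → ceilGap θ a ≤ ceilGap θ n := by
  obtain ⟨⟨haIcc, harec⟩, hmax⟩ := ha
  have ha1 := (Finset.mem_Icc.mp haIcc).1
  intro n
  induction n using Nat.strong_induction_on with
  | _ n ih =>
    intro han hnM
    rcases han.eq_or_lt with rfl | han
    · exact le_rfl
    have hnrec : ¬ IsCeilRecord θ n := fun hrec =>
      absurd (hmax ⟨Finset.mem_Icc.mpr ⟨by omega, hnM⟩, hrec⟩) (by omega)
    rw [isCeilRecord_iff (by omega)] at hnrec
    push Not at hnrec
    obtain ⟨m, hm, hratio⟩ := hnrec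
    obtain ⟨hm1, hmn⟩ := Finset.mem_Ico.mp hm
    have hmn_gap : ceilGap θ m ≤ ceilGap θ n := by
      have hmR : (0 : ℝ) < m := by exact_mod_cast hm1
      have hnR : (m : ℝ) ≤ n := by exact_mod_cast hmn.le
      rw [div_le_div_iff₀ hmR (by linarith)] at hratio
      nlinarith [ceilGap_nonneg θ n]
    rcases lt_trichotomy m a with hma | rfl | ham
    · exact (harec.ceilGap_le (Finset.mem_Ico.mpr ⟨hm1, hma⟩)).trans hmn_gap
    · exact hmn_gap
    · exact (ih m hmn ham.le (by omega)).trans hmn_gap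

lemma pinStep_isGreatest {M : ℕ} (hM : 1 ≤ M) :
    IsGreatest {b | b ∈ Finset.Icc 1 M ∧ IsCeilRecord θ b} (pinStep θ M) := by
  have h1 : 1 ∈ (Finset.Icc 1 M).filter (IsCeilRecord θ) :=
    Finset.mem_filter.mpr ⟨Finset.mem_Icc.mpr ⟨le_rfl, hM⟩, fun a' ha' => by
      simp at ha'⟩
  obtain ⟨a, ha⟩ := Finset.max_of_nonempty ⟨1, h1⟩
  have hpin : pinStep θ M = WithBot.unbotD 0 ((Finset.Icc 1 M).filter (IsCeilRecord θ)).max :=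
    rfl
  rw [hpin, ha, WithBot.unbotD_coe]
  exact ⟨Finset.mem_filter.mp (Finset.mem_of_max ha),
    fun b hb => Finset.le_max_of_eq (Finset.mem_filter.mpr hb) ha⟩

lemma ceil_mul_eq_ceil_pinStep_add {M : ℕ} (hM : 1 ≤ M) :
    ⌈(M : ℝ) * θ⌉ = ⌈(pinStep θ M : ℝ) * θ⌉ + ⌈((M - pinStep θ M : ℕ) : ℝ) * θ⌉ := by
  have hgreat := pinStep_isGreatest (θ := θ) hM
  have hle := (Finset.mem_Icc.mp hgreat.1.1).2
  exact ceil_mul_eq_add_of_ceilGap_le hle (ceilGap_le_of_isGreatest hgreat M hle le_rfl)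

lemma sum_ceil_pinListAux (θ : ℝ) {fuel M : ℕ} (hM : M ≤ fuel) :
    ((pinListAux θ fuel M).map (fun a : ℕ => ⌈(a : ℝ) * θ⌉)).sum = ⌈(M : ℝ) * θ⌉ := by
  induction fuel generalizing M with
  | zero => simp [pinListAux, Nat.le_zero.mp hM]
  | succ fuel ih =>
    rcases Nat.eq_zero_or_pos M with rfl | hM1
    · simp [pinListAux]
    have hstep_pos := (Finset.mem_Icc.mp (pinStep_isGreatest (θ := θ) hM1).1.1).1
    rw [pinListAux, if_neg hM1.ne', List.map_cons, List.sum_cons, ih (by omega)]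
    exact (ceil_mul_eq_ceil_pinStep_add hM1).symm

end PinIn

theorem pin_sum_ceil_general (θ : ℝ) (M : ℕ) :
    ((pinList θ M).map (fun a => ⌈(a : ℝ) * θ⌉)).sum = ⌈(M : ℝ) * θ⌉ := by
  -- The statement elaborates with `pinList θ M` coerced to a list of reals.
  simpa [pinList, ← List.map_eq_flatMap, Function.comp_def] using
    PinIn.sum_ceil_pinListAux (fuel := M) θ le_rfl

/-- the sum of `⌈aᵢθ⌉` over the incoming partition of `M` is `⌈Mθ⌉`. -/
theorem pin_sum_ceil (θ : ℝ) (hθ : Irrational θ) (M : ℕ) (hM : 1 ≤ M) :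
    ((pinList θ M).map (fun a => ⌈(a : ℝ) * θ⌉)).sum = ⌈(M : ℝ) * θ⌉ :=
  pin_sum_ceil_general θ M
end

section
/- Let θ be irrational and M a positive integer. The entries of the incoming partition P^in_θ(M) are exactly the horizontal displacements of the successive segments between lattice points of the lowest convex polygonal path Λ^in_θ(M) that starts at (0,0), ends at (M,⌈Mθ⌉), stays above the line y = θx, and has corners at lattice points. -/
open scoped Classical
open Finset

/-! Let `(a, ⌈aθ⌉)` be the first corner of the path. Because every lattice point `(b, ⌈bθ⌉)`,
`1 ≤ b ≤ M`, lies on or above the path, and the path is convex, the first step has the least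
slope `⌈bθ⌉ / b`; primitivity of the step makes `a` the least minimiser, i.e. the largest
record, which is `pinStep θ M`. Minimality of that slope forces `⌈(a + c)θ⌉ = ⌈aθ⌉ + ⌈cθ⌉`
for `a + c ≤ M`, so translating the rest of the path by `-(a, ⌈aθ⌉)` gives the path for
`M - a`, and the recursion defining `P^in_θ` follows the corners of the path. -/

theorem ceil_add_eq_of_mul_le (θ : ℝ) {a c : ℤ} (ha : 0 < a) (hc : 0 ≤ c)
    (h : ⌈(a : ℝ) * θ⌉ * (a + c) ≤ ⌈((a + c : ℤ) : ℝ) * θ⌉ * a) :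
    ⌈((a + c : ℤ) : ℝ) * θ⌉ = ⌈(a : ℝ) * θ⌉ + ⌈(c : ℝ) * θ⌉ := by
  have hle : ⌈((a + c : ℤ) : ℝ) * θ⌉ ≤ ⌈(a : ℝ) * θ⌉ + ⌈(c : ℝ) * θ⌉ := by
    push_cast
    rw [add_mul]
    exact Int.ceil_add_le _ _
  by_contra hne
  -- A drop of the ceiling would force `⌈aθ⌉ / a ≤ (⌈cθ⌉ - 1) / c < θ`.
  have hlt : ⌈((a + c : ℤ) : ℝ) * θ⌉ ≤ ⌈(a : ℝ) * θ⌉ + ⌈(c : ℝ) * θ⌉ - 1 := by omega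
  have hdrop : ⌈(a : ℝ) * θ⌉ * c ≤ (⌈(c : ℝ) * θ⌉ - 1) * a := by
    linarith [mul_le_mul_of_nonneg_right hlt ha.le]
  have hA := Int.le_ceil ((a : ℝ) * θ)
  have hC := Int.ceil_lt_add_one ((c : ℝ) * θ)
  have hdrop' : (⌈(a : ℝ) * θ⌉ : ℝ) * c ≤ (⌈(c : ℝ) * θ⌉ - 1) * a := by exact_mod_cast hdrop
  have ha' : (0 : ℝ) < a := by exact_mod_cast ha
  have hc' : (0 : ℝ) ≤ c := by exact_mod_cast hc
  nlinarith [mul_le_mul_of_nonneg_right hA hc', mul_lt_mul_of_pos_right hC ha']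

theorem Fin.exists_castSucc_le_le_succ {α : Type*} [LinearOrder α] {k : ℕ}
    (f : Fin (k + 2) → α) {b : α} (h0 : f 0 ≤ b) (hlast : b ≤ f (Fin.last (k + 1))) :
    ∃ i : Fin (k + 1), f i.castSucc ≤ b ∧ b ≤ f i.succ := by
  by_contra! h
  have hle : ∀ j, f j ≤ b := Fin.induction h0 fun i hi => (h i hi).le
  exact (h (Fin.last k) (hle _)).not_ge (Fin.succ_last k ▸ hlast)

theorem pinStep_eq_of_forall_mul_le {θ : ℝ} {M n : ℕ} (hn : n ∈ Icc 1 M)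
    (hrec : ∀ b ∈ Ico 1 n, ⌈(n : ℝ) * θ⌉ * b < ⌈(b : ℝ) * θ⌉ * n)
    (hmin : ∀ b ∈ Icc 1 M, ⌈(n : ℝ) * θ⌉ * b ≤ ⌈(b : ℝ) * θ⌉ * n) :
    pinStep θ M = n := by
  have hdiv : ∀ m b : ℕ, 1 ≤ m → 1 ≤ b →
      ((((⌈(m : ℝ) * θ⌉ : ℤ) : ℝ) / m < ((⌈(b : ℝ) * θ⌉ : ℤ) : ℝ) / b) ↔
        ⌈(m : ℝ) * θ⌉ * b < ⌈(b : ℝ) * θ⌉ * m) := by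
    intro m b hm hb
    rw [div_lt_div_iff₀ (by exact_mod_cast hm) (by exact_mod_cast hb)]
    exact_mod_cast Iff.rfl
  suffices h : ∀ F : Finset ℕ, n ∈ F → (∀ m ∈ F, m ≤ n) → WithBot.unbotD 0 F.max = n by
    apply h
    · simp only [mem_filter]
      exact ⟨hn, fun b hb => (hdiv n b (mem_Icc.1 hn).1 (mem_Ico.1 hb).1).2 (hrec b hb)⟩
    · intro m hm
      simp only [mem_filter] at hm
      obtain ⟨hmM, hmrec⟩ := hm
      by_contra! hlt
      have hn1 := (mem_Icc.1 hn).1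
      have h1 := (hdiv m n (mem_Icc.1 hmM).1 hn1).1 (hmrec n (mem_Ico.2 ⟨hn1, hlt⟩))
      have h2 := hmin m hmM
      nlinarith
  intro F hnF hF
  rw [le_antisymm (Finset.max_le fun m hm => WithBot.coe_le_coe.2 (hF m hm)) (Finset.le_max hnF),
    WithBot.unbotD_coe]

def pathStep {k : ℕ} (q : Fin (k + 1) → ℤ × ℤ) (i : Fin k) : ℤ × ℤ := q i.succ - q i.castSucc

theorem pathStep_succ_sub {k : ℕ} (q : Fin (k + 2) → ℤ × ℤ) (v : ℤ × ℤ) (i : Fin k) :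
    pathStep (fun j => q j.succ - v) i = pathStep q i.succ := by
  simp only [pathStep, Fin.succ_castSucc, sub_sub_sub_cancel_right]

structure IsLowerHullPath (θ : ℝ) (M : ℕ) {k : ℕ} (q : Fin (k + 1) → ℤ × ℤ) : Prop where
  zero : q 0 = 0
  last : q (Fin.last k) = ((M : ℤ), ⌈(M : ℝ) * θ⌉)
  step_pos : ∀ i, 0 < (pathStep q i).1
  above : ∀ i, θ * ((q i).1 : ℝ) ≤ ((q i).2 : ℝ)
  convex : ∀ i j, i ≤ j →
    (pathStep q i).2 * (pathStep q j).1 ≤ (pathStep q j).2 * (pathStep q i).1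
  coprime : ∀ i, Int.gcd (pathStep q i).1 (pathStep q i).2 = 1
  -- No lattice point on or above `y = θx` lies strictly below a segment (cross-multiplied).
  lowest : ∀ x y : ℤ, 0 ≤ x → x ≤ M → θ * (x : ℝ) ≤ (y : ℝ) →
    ∀ i, (q i.castSucc).1 ≤ x → x ≤ (q i.succ).1 →
      (pathStep q i).2 * (x - (q i.castSucc).1) ≤ (y - (q i.castSucc).2) * (pathStep q i).1

namespace IsLowerHullPath

variable {θ : ℝ} {M k : ℕ}

theorem strictMono_fst {q : Fin (k + 1) → ℤ × ℤ} (hp : IsLowerHullPath θ M q) :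
    StrictMono fun i => (q i).1 :=
  Fin.strictMono_iff_lt_succ.2 fun i => sub_pos.1 (hp.step_pos i)

variable {q : Fin (k + 2) → ℤ × ℤ}

theorem pathStep_zero (hp : IsLowerHullPath θ M q) : pathStep q 0 = q 1 := by
  rw [pathStep, Fin.succ_zero_eq_one, Fin.castSucc_zero, hp.zero, sub_zero]

theorem fst_one_pos (hp : IsLowerHullPath θ M q) : 0 < (q 1).1 := by
  simpa [hp.pathStep_zero] using hp.step_pos 0

theorem fst_one_le (hp : IsLowerHullPath θ M q) : (q 1).1 ≤ M := by
  simpa [hp.last] using hp.strictMono_fst.monotone (Fin.le_last 1)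

theorem above_first_step (hp : IsLowerHullPath θ M q) (j : Fin (k + 2)) :
    (q 1).2 * (q j).1 ≤ (q j).2 * (q 1).1 := by
  induction j using Fin.induction with
  | zero => simp [hp.zero]
  | succ j ih =>
    have hconv := hp.convex 0 j (Fin.zero_le j)
    rw [hp.pathStep_zero] at hconv
    simp only [pathStep, Prod.fst_sub, Prod.snd_sub] at hconv
    linarith

theorem first_slope_le (hp : IsLowerHullPath θ M q) (b : ℤ) (hb0 : 0 ≤ b) (hbM : b ≤ M) :
    (q 1).2 * b ≤ ⌈(b : ℝ) * θ⌉ * (q 1).1 := by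
  obtain ⟨i, hib, hbi⟩ := Fin.exists_castSucc_le_le_succ (fun j => (q j).1)
    (b := b) (by simpa [hp.zero] using hb0) (by simpa [hp.last] using hbM)
  have hlow := hp.lowest b ⌈(b : ℝ) * θ⌉ hb0 hbM (by rw [mul_comm]; exact Int.le_ceil _)
    i hib hbi
  have hconv := hp.convex 0 i (Fin.zero_le i)
  have hchain := hp.above_first_step i.castSucc
  have hΔ := hp.step_pos i
  have hx1 := hp.fst_one_pos
  rw [hp.pathStep_zero] at hconv
  -- Segment `i` lies above the line through the first step, and `(b, ⌈bθ⌉)` lies above segment `i`.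
  refine le_of_mul_le_mul_right ?_ hΔ
  nlinarith [mul_le_mul_of_nonneg_right hconv (sub_nonneg.2 hib),
    mul_le_mul_of_nonneg_right hchain hΔ.le, mul_le_mul_of_nonneg_right hlow hx1.le]

theorem snd_one (hp : IsLowerHullPath θ M q) : (q 1).2 = ⌈((q 1).1 : ℝ) * θ⌉ := by
  refine le_antisymm ?_ (Int.ceil_le.2 (by linarith [hp.above 1]))
  exact le_of_mul_le_mul_right (hp.first_slope_le _ hp.fst_one_pos.le hp.fst_one_le) hp.fst_one_pos

theorem first_slope_lt (hp : IsLowerHullPath θ M q) (b : ℤ) (hb0 : 0 < b) (hb1 : b < (q 1).1) :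
    (q 1).2 * b < ⌈(b : ℝ) * θ⌉ * (q 1).1 := by
  refine (hp.first_slope_le b hb0.le (hb1.le.trans hp.fst_one_le)).lt_of_ne fun heq => ?_
  have hcop : IsCoprime (q 1).1 (q 1).2 := by
    simpa [Int.isCoprime_iff_gcd_eq_one, hp.pathStep_zero] using hp.coprime 0
  have hdvd : (q 1).1 ∣ b := hcop.dvd_of_dvd_mul_left ⟨⌈(b : ℝ) * θ⌉, by rw [heq, mul_comm]⟩
  exact (Int.le_of_dvd hb0 hdvd).not_gt hb1

theorem pinStep_eq (hp : IsLowerHullPath θ M q) : (pinStep θ M : ℤ) = (q 1).1 := by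
  obtain ⟨n, hn⟩ := Int.eq_ofNat_of_zero_le hp.fst_one_pos.le
  have hy : (q 1).2 = ⌈(n : ℝ) * θ⌉ := by rw [hp.snd_one, hn, Int.cast_natCast]
  have h1 := hp.fst_one_pos
  have hM := hp.fst_one_le
  rw [hn] at h1 hM ⊢
  rw [pinStep_eq_of_forall_mul_le (n := n) (mem_Icc.2 ⟨by omega, by omega⟩)]
  · intro b hb
    have := hp.first_slope_lt b (by exact_mod_cast (mem_Ico.1 hb).1)
      (by simp [hn, (mem_Ico.1 hb).2])
    simpa [hy, hn] using this
  · intro b hb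
    have := hp.first_slope_le b (by simp) (by exact_mod_cast (mem_Icc.1 hb).2)
    simpa [hy, hn] using this

theorem ceil_add (hp : IsLowerHullPath θ M q) (c : ℤ) (hc : 0 ≤ c) (hcM : (q 1).1 + c ≤ M) :
    ⌈(((q 1).1 + c : ℤ) : ℝ) * θ⌉ = (q 1).2 + ⌈(c : ℝ) * θ⌉ := by
  have hmin := hp.first_slope_le _ (by linarith [hp.fst_one_pos]) hcM
  rw [hp.snd_one] at hmin ⊢
  exact ceil_add_eq_of_mul_le θ hp.fst_one_pos hc hmin

theorem tail (hp : IsLowerHullPath θ M q) {M' : ℕ} (hM' : (q 1).1 + M' = M) :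
    IsLowerHullPath θ M' fun i => q i.succ - q 1 where
  zero := by rw [Fin.succ_zero_eq_one, sub_self]
  last := by
    have hceil := hp.ceil_add M' (Int.natCast_nonneg M') hM'.le
    rw [hM'] at hceil
    simp only [Int.cast_natCast] at hceil
    rw [Fin.succ_last, hp.last]
    ext <;> simp only [Prod.fst_sub, Prod.snd_sub] <;> omega
  step_pos i := by
    rw [pathStep_succ_sub]
    exact hp.step_pos _
  above i := by
    have hmono := hp.strictMono_fst.monotone
    set c := (q i.succ).1 - (q 1).1 with hc
    have hceil := hp.ceil_add c (sub_nonneg.2 (hmono (Fin.succ_pos i)))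
      (by simpa [c, hp.last] using hmono (Fin.le_last i.succ))
    have hsum : (q 1).2 + ⌈(c : ℝ) * θ⌉ ≤ (q i.succ).2 := by
      rw [← hceil, add_sub_cancel]
      exact Int.ceil_le.2 (by linarith [hp.above i.succ])
    have hsum' : ((q 1).2 : ℝ) + ⌈(c : ℝ) * θ⌉ ≤ (q i.succ).2 := by exact_mod_cast hsum
    clear_value c
    simp only [Prod.fst_sub, Prod.snd_sub, ← hc, Int.cast_sub]
    rw [mul_comm]
    linarith [Int.le_ceil ((c : ℝ) * θ)]
  convex i j hij := by
    simpa only [pathStep_succ_sub] using hp.convex _ _ (Fin.succ_le_succ_iff.2 hij)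
  coprime i := by
    simpa only [pathStep_succ_sub] using hp.coprime i.succ
  lowest x y hx0 hxM hxy i hxi hxi' := by
    simp only [pathStep_succ_sub, Prod.fst_sub, Prod.snd_sub, Fin.succ_castSucc] at hxi hxi' ⊢
    have hlow := hp.lowest (x + (q 1).1) (y + (q 1).2) (by linarith [hp.fst_one_pos]) (by omega)
      (by push_cast; linarith [hp.above 1]) i.succ (by linarith) (by linarith)
    convert hlow using 2 <;> ring

end IsLowerHullPath

theorem IsLowerHullPath.pinListAux_eq {θ : ℝ} {k M : ℕ} {q : Fin (k + 1) → ℤ × ℤ}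
    (hp : IsLowerHullPath θ M q) (fuel : ℕ) (hfuel : M ≤ fuel) :
    pinListAux θ fuel M = List.ofFn fun i => (pathStep q i).1.toNat := by
  induction k generalizing M fuel with
  | zero =>
    have hM : (M : ℤ) = 0 := congrArg Prod.fst (hp.last.symm.trans hp.zero)
    cases fuel <;> simp [pinListAux, show M = 0 by omega]
  | succ k ih =>
    have hstep := hp.pinStep_eq
    have h1 := hp.fst_one_pos
    have hM := hp.fst_one_le
    obtain ⟨f, rfl⟩ : ∃ f, fuel = f + 1 := ⟨fuel - 1, by omega⟩
    rw [pinListAux, if_neg (by omega), List.ofFn_succ,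
      ih (hp.tail (M' := M - pinStep θ M) (by omega)) f (by omega), hp.pathStep_zero]
    simp only [pathStep_succ_sub]
    congr
    omega

theorem pin_eq_path_displacements_general (θ : ℝ) (M : ℕ)
    (k : ℕ) (q : Fin (k + 1) → ℤ × ℤ)
    (h0 : q 0 = (0, 0))
    (hlast : q (Fin.last k) = ((M : ℤ), ⌈(M : ℝ) * θ⌉))
    (hmono : ∀ i : Fin k, (q i.castSucc).1 < (q i.succ).1)
    (habove : ∀ i : Fin (k + 1), θ * ((q i).1 : ℝ) ≤ ((q i).2 : ℝ))
    (hconvex : ∀ i j : Fin k, i ≤ j →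
      ((q i.succ).2 - (q i.castSucc).2) * ((q j.succ).1 - (q j.castSucc).1) ≤
        ((q j.succ).2 - (q j.castSucc).2) * ((q i.succ).1 - (q i.castSucc).1))
    (hprim : ∀ i : Fin k,
      Int.gcd ((q i.succ).1 - (q i.castSucc).1) ((q i.succ).2 - (q i.castSucc).2) = 1)
    (hlowest : ∀ x y : ℤ, 0 ≤ x → x ≤ (M : ℤ) → θ * (x : ℝ) ≤ (y : ℝ) →
      ∀ i : Fin k, (q i.castSucc).1 ≤ x → x ≤ (q i.succ).1 →
        ((q i.succ).2 - (q i.castSucc).2) * (x - (q i.castSucc).1) ≤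
          (y - (q i.castSucc).2) * ((q i.succ).1 - (q i.castSucc).1)) :
    (↑(pinList θ M) : Multiset ℕ) =
      Multiset.map (fun i : Fin k => ((q i.succ).1 - (q i.castSucc).1).toNat)
        Finset.univ.val := by
  have hp : IsLowerHullPath θ M q :=
    ⟨h0, hlast, fun i => sub_pos.2 (hmono i), habove, hconvex, hprim, hlowest⟩
  rw [Fin.univ_val_map, pinList, hp.pinListAux_eq M le_rfl]
  rfl

/-- the entries of the incoming partition `P^in_θ(M)` are exactly the
horizontal displacements of the successive segments between lattice points of the lowest
convex polygonal path from `(0,0)` to `(M,⌈Mθ⌉)` staying above the line `y = θx` with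
corners at lattice points.  The path is described by its successive lattice points
`q 0, …, q k`; consecutive lattice points means each displacement vector is primitive. -/
theorem pin_eq_path_displacements (θ : ℝ) (hθ : Irrational θ) (M : ℕ) (hM : 1 ≤ M)
    (k : ℕ) (q : Fin (k + 1) → ℤ × ℤ)
    (h0 : q 0 = (0, 0))
    (hlast : q (Fin.last k) = ((M : ℤ), ⌈(M : ℝ) * θ⌉))
    (hmono : ∀ i : Fin k, (q i.castSucc).1 < (q i.succ).1)
    (habove : ∀ i : Fin (k + 1), θ * ((q i).1 : ℝ) ≤ ((q i).2 : ℝ))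
    (hconvex : ∀ i j : Fin k, i ≤ j →
      ((q i.succ).2 - (q i.castSucc).2) * ((q j.succ).1 - (q j.castSucc).1) ≤
        ((q j.succ).2 - (q j.castSucc).2) * ((q i.succ).1 - (q i.castSucc).1))
    (hprim : ∀ i : Fin k,
      Int.gcd ((q i.succ).1 - (q i.castSucc).1) ((q i.succ).2 - (q i.castSucc).2) = 1)
    (hlowest : ∀ x y : ℤ, 0 ≤ x → x ≤ (M : ℤ) → θ * (x : ℝ) ≤ (y : ℝ) →
      ∀ i : Fin k, (q i.castSucc).1 ≤ x → x ≤ (q i.succ).1 →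
        ((q i.succ).2 - (q i.castSucc).2) * (x - (q i.castSucc).1) ≤
          (y - (q i.castSucc).2) * ((q i.succ).1 - (q i.castSucc).1)) :
    (↑(pinList θ M) : Multiset ℕ) =
      Multiset.map (fun i : Fin k => ((q i.succ).1 - (q i.castSucc).1).toNat)
        Finset.univ.val :=
  pin_eq_path_displacements_general θ M k q h0 hlast hmono habove hconvex hprim hlowest
end

section
/- Let θ be irrational and suppose positive integers m₁, m₂ satisfy ⌈(m₁+m₂)θ⌉ = ⌈m₁θ⌉ + ⌈m₂θ⌉ − 1. Then it is impossible that m₁ and m₂ both appear in the incoming partition P^in_θ(M) (for any M containing them), since writing P^in_θ(M) = (m₁, m₂, m₃, …, m_k) would force ⌈(m₁+m₂)θ⌉ + ∑_{i=3}^k ⌈mᵢθ⌉ = ⌊Mθ⌋, contradicting that each ⌈mᵢθ⌉ > mᵢθ. Formally: if a₁,…,a_k are positive integers with ∑ᵢ aᵢ = M and ∑ᵢ ⌈aᵢθ⌉ = ⌈Mθ⌉, and k ≥ 2, then for all distinct indices i, j one has ⌈(aᵢ+aⱼ)θ⌉ = ⌈aᵢθ⌉ + ⌈aⱼθ⌉.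 -/
open Finset

/-! Subadditivity bounds `f (∑ g)` by `f (g i + g j) + ∑_{l ≠ i, j} f (g l)` and that in turn by
`∑ f (g l)`; when the two ends agree, the middle inequality `f (g i + g j) ≤ f (g i) + f (g j)`
must be an equality. -/

theorem map_add_eq_of_map_sum_eq_sum_map {ι M N : Type*} [Fintype ι] [DecidableEq ι]
    [AddCommMonoid M] [AddCommMonoid N] [PartialOrder N] [IsOrderedCancelAddMonoid N]
    (f : M → N) (h_zero : f 0 ≤ 0) (h_add : ∀ x y, f (x + y) ≤ f x + f y) (g : ι → M)
    (h_sum : f (∑ l, g l) = ∑ l, f (g l)) {i j : ι} (hij : i ≠ j) :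
    f (g i + g j) = f (g i) + f (g j) := by
  set rest := ({i, j} : Finset ι)ᶜ
  have h_split_g : ∑ l, g l = g i + g j + ∑ l ∈ rest, g l := by
    rw [← sum_add_sum_compl {i, j}, sum_pair hij]
  have h_split_fg : ∑ l, f (g l) = f (g i) + f (g j) + ∑ l ∈ rest, f (g l) := by
    rw [← sum_add_sum_compl {i, j}, sum_pair hij]
  refine le_antisymm (h_add _ _) (le_of_add_le_add_right (a := ∑ l ∈ rest, f (g l)) ?_)
  calc f (g i) + f (g j) + ∑ l ∈ rest, f (g l)
      = f (g i + g j + ∑ l ∈ rest, g l) := by rw [← h_split_g, ← h_split_fg, h_sum]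
    _ ≤ f (g i + g j) + f (∑ l ∈ rest, g l) := h_add _ _
    _ ≤ f (g i + g j) + ∑ l ∈ rest, f (g l) := by
        gcongr
        exact le_sum_of_subadditive f h_zero h_add rest g

theorem Int.ceil_natCast_add_mul_le (θ : ℝ) (m n : ℕ) :
    ⌈((m + n : ℕ) : ℝ) * θ⌉ ≤ ⌈(m : ℝ) * θ⌉ + ⌈(n : ℝ) * θ⌉ := by
  rw [Nat.cast_add, add_mul]
  exact Int.ceil_add_le _ _

theorem ceil_pairwise_additive_general (θ : ℝ) (k M : ℕ)
    (a : Fin k → ℕ) (hsum : ∑ i, a i = M)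
    (hceil : ∑ i, ⌈(a i : ℝ) * θ⌉ = ⌈(M : ℝ) * θ⌉) :
    ∀ i j : Fin k, i ≠ j →
      ⌈((a i + a j : ℕ) : ℝ) * θ⌉ = ⌈(a i : ℝ) * θ⌉ + ⌈(a j : ℝ) * θ⌉ := by
  intro i j hij
  refine map_add_eq_of_map_sum_eq_sum_map (fun n : ℕ => ⌈(n : ℝ) * θ⌉) (by simp)
    (Int.ceil_natCast_add_mul_le θ) a ?_ hij
  simp only [hsum, hceil]

/-- if positive integers `a₁,…,a_k` (k ≥ 2) sum to `M` with
`∑ᵢ ⌈aᵢθ⌉ = ⌈Mθ⌉`, then the ceiling is additive on every pair. -/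
theorem ceil_pairwise_additive (θ : ℝ) (hθ : Irrational θ) (k M : ℕ) (hk : 2 ≤ k)
    (a : Fin k → ℕ) (ha : ∀ i, 0 < a i) (hsum : ∑ i, a i = M)
    (hceil : ∑ i, ⌈(a i : ℝ) * θ⌉ = ⌈(M : ℝ) * θ⌉) :
    ∀ i j : Fin k, i ≠ j →
      ⌈((a i + a j : ℕ) : ℝ) * θ⌉ = ⌈(a i : ℝ) * θ⌉ + ⌈(a j : ℝ) * θ⌉ :=
  ceil_pairwise_additive_general θ k M a hsum hceil
end

section
/- Let θ be irrational and let a ∈ S_θ, i.e. a is a positive integer with ⌈aθ⌉/a < ⌈a′θ⌉/a′ for all a′ ∈ {1,…,a−1}. Then the line segment from (0,0) to (a,⌈aθ⌉) contains no lattice points in its interior; equivalently gcd(a, ⌈aθ⌉) = 1. -/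
/-!
If `d > 1` divided both `a = d a'` and `⌈aθ⌉`, then `⌈d · a'θ⌉` would be a multiple of `d`,
which forces `⌈aθ⌉ = d ⌈a'θ⌉`. The smaller denominator `a'` would then attain the same ratio
`⌈a'θ⌉ / a' = ⌈aθ⌉ / a`, contradicting the strict minimality defining `S_θ`.
-/

theorem Int.ceil_mul_eq_mul_ceil_of_dvd {α : Type*} [Field α] [LinearOrder α]
    [IsStrictOrderedRing α] [FloorRing α] {d : ℤ} (hd : 0 < d) (x : α)
    (h : d ∣ ⌈(d : α) * x⌉) : ⌈(d : α) * x⌉ = d * ⌈x⌉ := by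
  obtain ⟨y, hy⟩ := h
  have hdα : (0 : α) < d := Int.cast_pos.mpr hd
  have hxy : x ≤ (y : α) := by
    have : (d : α) * x ≤ d * y := by exact_mod_cast hy ▸ Int.le_ceil ((d : α) * x)
    exact _root_.le_of_mul_le_mul_left this hdα
  have hy_le : y ≤ ⌈x⌉ := by
    have : ⌈(d : α) * x⌉ ≤ d * ⌈x⌉ := Int.ceil_le.mpr <| by
      push_cast
      exact mul_le_mul_of_nonneg_left (Int.le_ceil x) hdα.le
    exact _root_.le_of_mul_le_mul_left (hy ▸ this) hd
  rw [hy, le_antisymm (Int.ceil_le.mpr hxy) hy_le]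

theorem Stheta_primitive_general (θ : ℝ) (a : ℕ) (ha : 0 < a)
    (hS : ∀ a' : ℕ, 0 < a' → a' < a →
      ((⌈(a : ℝ) * θ⌉ : ℤ) : ℝ) / (a : ℝ) < ((⌈(a' : ℝ) * θ⌉ : ℤ) : ℝ) / (a' : ℝ)) :
    Int.gcd (a : ℤ) ⌈(a : ℝ) * θ⌉ = 1 := by
  by_contra hne
  obtain ⟨d, hd, hda, hdy⟩ : ∃ d : ℕ, 1 < d ∧ d ∣ a ∧ (d : ℤ) ∣ ⌈(a : ℝ) * θ⌉ := by
    refine ⟨_, ?_, Int.ofNat_dvd.mp (Int.gcd_dvd_left _ _), Int.gcd_dvd_right _ _⟩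
    have := Int.gcd_pos_of_ne_zero_left ⌈(a : ℝ) * θ⌉ (by omega : (a : ℤ) ≠ 0)
    omega
  obtain ⟨a', rfl⟩ := hda
  have ha'_pos : 0 < a' := Nat.pos_of_mul_pos_left ha
  have hceil : ⌈((d * a' : ℕ) : ℝ) * θ⌉ = d * ⌈(a' : ℝ) * θ⌉ := by
    push_cast at hdy ⊢
    rw [mul_assoc] at hdy ⊢
    exact_mod_cast Int.ceil_mul_eq_mul_ceil_of_dvd (by omega) ((a' : ℝ) * θ) (by exact_mod_cast hdy)
  have hratio : ((⌈((d * a' : ℕ) : ℝ) * θ⌉ : ℤ) : ℝ) / (d * a' : ℕ)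
      = ((⌈(a' : ℝ) * θ⌉ : ℤ) : ℝ) / a' := by
    rw [hceil]
    push_cast
    exact mul_div_mul_left _ _ (by positivity)
  have := hS a' ha'_pos (lt_mul_left ha'_pos hd)
  exact lt_irrefl _ (hratio ▸ this)

/-- if `a ∈ S_θ`, i.e. `⌈aθ⌉/a < ⌈a'θ⌉/a'` for all positive `a' < a`,
then the vector `(a, ⌈aθ⌉)` is primitive: `gcd(a, ⌈aθ⌉) = 1`. -/
theorem Stheta_primitive (θ : ℝ) (hθ : Irrational θ) (a : ℕ) (ha : 0 < a)
    (hS : ∀ a' : ℕ, 0 < a' → a' < a →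
      ((⌈(a : ℝ) * θ⌉ : ℤ) : ℝ) / (a : ℝ) < ((⌈(a' : ℝ) * θ⌉ : ℤ) : ℝ) / (a' : ℝ)) :
    Int.gcd (a : ℤ) ⌈(a : ℝ) * θ⌉ = 1 :=
  Stheta_primitive_general θ a ha hS
end

section
/- Let θ be irrational and M ≥ 1. Write P^in_θ(M) = (a₁,…,a_k) and P^out_θ(M) = (b₁,…,b_l), each with entries in nonincreasing order. Then there is a unique subset I = {i₁ < ⋯ < i_m} ⊆ {1,…,l} such that ∑_{j=1}^{m−1} b_{i_j} < a₁ ≤ ∑_{j=1}^m b_{i_j}, and moreover I = {1,…,m} for some m. -/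
/-!
Write `f q = fract (qθ)`. For irrational `θ`, `⌈qθ⌉ / q = θ + (1 - f q) / q`, so the record
that `P^in_θ` takes from `{1, …, N}` maximizes `f` there, and the one that `P^out_θ` takes
minimizes it. Since `f b ≤ f (b + q)` forces `f (b + q) = f b + f q`, removing a minimizer
`b < w` from `{1, …, N}` leaves `w - b` a maximizer on `{1, …, N - b}`, and a minimizer `b` and
a maximizer `w` always satisfy `N < b + w`. Hence `M < b_i + a₁` as long as
`b₁ + ⋯ + b_{i-1} < a₁`: no part before the first partial sum reaching `a₁` can be left out of
`I`, and no later part can be added to it.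
-/

open scoped Classical
open Finset

namespace Int

theorem fract_add_eq_or (x y : ℝ) :
    fract (x + y) = fract x + fract y ∨ fract (x + y) = fract x + fract y - 1 := by
  obtain ⟨z, hz⟩ := fract_add x y
  have hz0 : (z : ℝ) ≤ 0 := by linarith [fract_add_le x y]
  have hz1 : (-2 : ℝ) < z := by linarith [fract_lt_one x, fract_lt_one y, fract_nonneg (x + y)]
  obtain rfl | rfl : z = 0 ∨ z = -1 := by
    have : z ≤ 0 := by exact_mod_cast hz0
    have : -2 < z := by exact_mod_cast hz1
    omega
  · left; push_cast at hz; linarith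
  · right; push_cast at hz; linarith

theorem fract_add_of_fract_le {x y : ℝ} (h : fract x ≤ fract (x + y)) :
    fract (x + y) = fract x + fract y :=
  (fract_add_eq_or x y).resolve_right fun h' => by linarith [fract_lt_one y]

theorem fract_add_of_lt_fract {x y : ℝ} (h : fract (x + y) < fract x) :
    fract (x + y) = fract x + fract y - 1 :=
  (fract_add_eq_or x y).resolve_left fun h' => by linarith [fract_nonneg y]

end Int

namespace Irrational

variable {θ : ℝ} {q : ℕ}

theorem fract_natCast_mul_pos (hθ : Irrational θ) (hq : q ≠ 0) : 0 < Int.fract ((q : ℝ) * θ) :=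
  (Int.fract_nonneg _).lt_of_ne' fun h => (hθ.natCast_mul hq).ne_int ⌊(q : ℝ) * θ⌋
    (by rw [← Int.self_sub_fract, h, sub_zero])

theorem fract_natCast_mul_neg (hθ : Irrational θ) (hq : q ≠ 0) :
    Int.fract ((q : ℝ) * -θ) = 1 - Int.fract ((q : ℝ) * θ) := by
  rw [mul_neg, Int.fract_neg (hθ.fract_natCast_mul_pos hq).ne']

theorem ceil_natCast_mul_div (hθ : Irrational θ) (hq : q ≠ 0) :
    (⌈(q : ℝ) * θ⌉ : ℝ) / q = θ + (1 - Int.fract ((q : ℝ) * θ)) / q := by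
  have hq' : (q : ℝ) ≠ 0 := Nat.cast_ne_zero.2 hq
  rw [Int.ceil_eq_add_one_sub_fract (hθ.fract_natCast_mul_pos hq).ne']
  field_simp
  ring

end Irrational

def IsCeilRecord (θ : ℝ) (a : ℕ) : Prop :=
  ∀ a' ∈ Ico 1 a, ((⌈(a : ℝ) * θ⌉ : ℤ) : ℝ) / (a : ℝ) < ((⌈(a' : ℝ) * θ⌉ : ℤ) : ℝ) / (a' : ℝ)

theorem pinStep_spec (θ : ℝ) {N : ℕ} (hN : 1 ≤ N) :
    pinStep θ N ∈ Set.Icc 1 N ∧ IsCeilRecord θ (pinStep θ N) ∧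
      ∀ a ∈ Icc 1 N, IsCeilRecord θ a → a ≤ pinStep θ N := by
  set s := (Icc 1 N).filter (IsCeilRecord θ)
  have hs : s.Nonempty := ⟨1, mem_filter.2 ⟨mem_Icc.2 ⟨le_rfl, hN⟩, by simp [IsCeilRecord]⟩⟩
  have hmax : pinStep θ N = s.max' hs := by
    change WithBot.unbotD 0 s.max = _
    rw [← coe_max' hs, WithBot.unbotD_coe]
  rw [hmax]
  exact ⟨mem_Icc.1 (mem_filter.1 (s.max'_mem hs)).1, (mem_filter.1 (s.max'_mem hs)).2,
    fun a ha hrec => s.le_max' a (mem_filter.2 ⟨ha, hrec⟩)⟩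

theorem sum_pinListAux (θ : ℝ) {fuel N : ℕ} (hN : N ≤ fuel) : (pinListAux θ fuel N).sum = N := by
  induction fuel generalizing N with
  | zero => simp [pinListAux, Nat.le_zero.1 hN]
  | succ fuel ih =>
    rcases Nat.eq_zero_or_pos N with rfl | hN1
    · simp [pinListAux]
    obtain ⟨⟨hp1, hpN⟩, -, -⟩ := pinStep_spec θ hN1
    rw [pinListAux, if_neg hN1.ne', List.sum_cons, ih (by omega)]
    omega

theorem headI_pinList (θ : ℝ) {M : ℕ} (hM : 1 ≤ M) : (pinList θ M).headI = pinStep θ M := by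
  obtain ⟨k, rfl⟩ := Nat.exists_eq_add_of_le' hM
  simp [pinList, pinListAux]

section FractMul

variable {θ : ℝ}

theorem isCeilRecord_iff (hθ : Irrational θ) {a : ℕ} :
    IsCeilRecord θ a ↔ ∀ a' ∈ Ico 1 a,
      (1 - Int.fract ((a : ℝ) * θ)) / a < (1 - Int.fract ((a' : ℝ) * θ)) / a' := by
  refine forall₂_congr fun a' ha' => ?_
  obtain ⟨h1, h2⟩ := mem_Ico.1 ha'
  rw [hθ.ceil_natCast_mul_div (by omega), hθ.ceil_natCast_mul_div (by omega), add_lt_add_iff_left]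

theorem fract_le_of_isCeilRecord (hθ : Irrational θ) {a q : ℕ} (ha : IsCeilRecord θ a)
    (hq : q ∈ Ico 1 a) : Int.fract ((q : ℝ) * θ) ≤ Int.fract ((a : ℝ) * θ) := by
  obtain ⟨hq1, hqa⟩ := mem_Ico.1 hq
  obtain ⟨d, rfl⟩ := Nat.exists_eq_add_of_lt hqa
  by_contra! hlt
  -- Both `q` and `d + 1` precede the record `a = q + (d + 1)`, and the two record
  -- inequalities add up to `(1 - fract (aθ)) a < (1 - fract (aθ)) a`.
  have hfd : Int.fract (((q + d + 1 : ℕ) : ℝ) * θ)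
      = Int.fract ((q : ℝ) * θ) + Int.fract (((d + 1 : ℕ) : ℝ) * θ) - 1 := by
    push_cast [add_assoc, add_mul] at hlt ⊢
    exact Int.fract_add_of_lt_fract hlt
  have hrq := (isCeilRecord_iff hθ).1 ha q hq
  have hrd := (isCeilRecord_iff hθ).1 ha (d + 1) (mem_Ico.2 ⟨by omega, by omega⟩)
  rw [div_lt_div_iff₀ (by positivity) (by positivity), hfd] at hrq hrd
  push_cast at hrq hrd
  linarith

theorem isCeilRecord_of_forall_fract_le (hθ : Irrational θ) {b : ℕ} (hb : 1 ≤ b)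
    (h : ∀ q ∈ Ico 1 b, Int.fract ((q : ℝ) * θ) ≤ Int.fract ((b : ℝ) * θ)) :
    IsCeilRecord θ b := by
  refine (isCeilRecord_iff hθ).2 fun q hq => ?_
  obtain ⟨hq1, hqb⟩ := mem_Ico.1 hq
  have hqb' : (q : ℝ) < b := by exact_mod_cast hqb
  have hfb : 0 < 1 - Int.fract ((b : ℝ) * θ) := sub_pos.2 (Int.fract_lt_one _)
  rw [div_lt_div_iff₀ (by positivity) (by positivity)]
  calc (1 - Int.fract ((b : ℝ) * θ)) * q < (1 - Int.fract ((b : ℝ) * θ)) * b :=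
        mul_lt_mul_of_pos_left hqb' hfb
    _ ≤ (1 - Int.fract ((q : ℝ) * θ)) * b := by gcongr; exact h q hq

theorem pinStep_isMaxOn (hθ : Irrational θ) {N : ℕ} (hN : 1 ≤ N) :
    IsMaxOn (fun q : ℕ => Int.fract ((q : ℝ) * θ)) (Set.Icc 1 N) (pinStep θ N) := by
  obtain ⟨-, hrec, hle⟩ := pinStep_spec θ hN
  obtain ⟨b, hb, hbmax⟩ := (Icc 1 N).exists_max_image (fun q : ℕ => Int.fract ((q : ℝ) * θ))
    ⟨1, mem_Icc.2 ⟨le_rfl, hN⟩⟩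
  obtain ⟨hb1, hbN⟩ := mem_Icc.1 hb
  have hbrec : IsCeilRecord θ b := isCeilRecord_of_forall_fract_le hθ hb1 fun q hq =>
    hbmax q (mem_Icc.2 ⟨(mem_Ico.1 hq).1, (mem_Ico.1 hq).2.le.trans hbN⟩)
  have hba : Int.fract ((b : ℝ) * θ) ≤ Int.fract ((pinStep θ N : ℝ) * θ) := by
    rcases (hle b hb hbrec).lt_or_eq with hlt | heq
    · exact fract_le_of_isCeilRecord hθ hrec (mem_Ico.2 ⟨hb1, hlt⟩)
    · rw [heq]
  exact isMaxOn_iff.2 fun q hq => (hbmax q (by simpa using hq)).trans hba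

theorem pinStep_neg_isMinOn (hθ : Irrational θ) {N : ℕ} (hN : 1 ≤ N) :
    IsMinOn (fun q : ℕ => Int.fract ((q : ℝ) * θ)) (Set.Icc 1 N) (pinStep (-θ) N) := by
  refine isMinOn_iff.2 fun q hq => ?_
  obtain ⟨⟨hp1, -⟩, -, -⟩ := pinStep_spec (-θ) hN
  have := isMaxOn_iff.1 (pinStep_isMaxOn hθ.neg hN) q hq
  rw [hθ.fract_natCast_mul_neg (Nat.one_le_iff_ne_zero.1 hq.1),
    hθ.fract_natCast_mul_neg (by omega)] at this
  linarith

section MinMax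

variable {N b w : ℕ}

theorem fract_natCast_add_mul_of_le {q : ℕ}
    (h : Int.fract ((b : ℝ) * θ) ≤ Int.fract (((b + q : ℕ) : ℝ) * θ)) :
    Int.fract (((b + q : ℕ) : ℝ) * θ) = Int.fract ((b : ℝ) * θ) + Int.fract ((q : ℝ) * θ) := by
  push_cast [add_mul] at h ⊢
  exact Int.fract_add_of_fract_le h

theorem lt_add_of_isMinOn_of_isMaxOn (hb : b ∈ Set.Icc 1 N)
    (hbmin : IsMinOn (fun q : ℕ => Int.fract ((q : ℝ) * θ)) (Set.Icc 1 N) b)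
    (hwmax : IsMaxOn (fun q : ℕ => Int.fract ((q : ℝ) * θ)) (Set.Icc 1 N) w)
    (hpos : 0 < Int.fract ((b : ℝ) * θ)) : N < b + w := by
  by_contra! hle
  have hmem : b + w ∈ Set.Icc 1 N := ⟨hb.1.trans (Nat.le_add_right b w), hle⟩
  have hadd := fract_natCast_add_mul_of_le (isMinOn_iff.1 hbmin _ hmem)
  linarith [isMaxOn_iff.1 hwmax _ hmem]

theorem isMaxOn_sub_of_isMinOn
    (hbmin : IsMinOn (fun q : ℕ => Int.fract ((q : ℝ) * θ)) (Set.Icc 1 N) b)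
    (hw : w ∈ Set.Icc 1 N)
    (hwmax : IsMaxOn (fun q : ℕ => Int.fract ((q : ℝ) * θ)) (Set.Icc 1 N) w) (hbw : b < w) :
    w - b ∈ Set.Icc 1 (N - b) ∧
      IsMaxOn (fun q : ℕ => Int.fract ((q : ℝ) * θ)) (Set.Icc 1 (N - b)) (w - b) := by
  obtain ⟨v, rfl⟩ := Nat.exists_eq_add_of_le hbw.le
  obtain ⟨hw1, hwN⟩ := hw
  rw [Nat.add_sub_cancel_left]
  refine ⟨⟨by omega, by omega⟩, isMaxOn_iff.2 fun q hq => ?_⟩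
  obtain ⟨hq1, hqN⟩ := hq
  have hmem : b + q ∈ Set.Icc 1 N := ⟨by omega, by omega⟩
  have hfw := fract_natCast_add_mul_of_le (isMinOn_iff.1 hbmin _ ⟨hw1, hwN⟩)
  have hfq := fract_natCast_add_mul_of_le (isMinOn_iff.1 hbmin _ hmem)
  have := isMaxOn_iff.1 hwmax _ hmem
  linarith

end MinMax

theorem lt_getElem_pinListAux_neg_add (hθ : Irrational θ) {fuel N w : ℕ} (hN : N ≤ fuel)
    (hw : w ∈ Set.Icc 1 N)
    (hwmax : IsMaxOn (fun q : ℕ => Int.fract ((q : ℝ) * θ)) (Set.Icc 1 N) w) :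
    ∀ i (hi : i < (pinListAux (-θ) fuel N).length),
      ((pinListAux (-θ) fuel N).take i).sum < w → N < (pinListAux (-θ) fuel N)[i] + w := by
  induction fuel generalizing N w with
  | zero => simp [pinListAux]
  | succ fuel ih =>
    have hN1 : 1 ≤ N := hw.1.trans hw.2
    obtain ⟨⟨hb1, hbN⟩, -, -⟩ := pinStep_spec (-θ) hN1
    have hbmin := pinStep_neg_isMinOn hθ hN1
    rw [pinListAux, if_neg (Nat.one_le_iff_ne_zero.1 hN1)]
    rintro (_ | k) hi hsum
    · exact lt_add_of_isMinOn_of_isMaxOn ⟨hb1, hbN⟩ hbmin hwmax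
        (hθ.fract_natCast_mul_pos (Nat.one_le_iff_ne_zero.1 hb1))
    · rw [List.take_succ_cons, List.sum_cons] at hsum
      obtain ⟨hw', hwmax'⟩ := isMaxOn_sub_of_isMinOn hbmin hw hwmax (by omega)
      have := ih (by omega) hw' hwmax' k (by simpa using hi) (by omega)
      rw [List.getElem_cons_succ]
      omega

end FractMul

section Brackets

variable {L : List ℕ} {A : ℕ}

def Brackets (L : List ℕ) (A : ℕ) (I : Finset (Fin L.length)) : Prop :=
  ∃ h : I.Nonempty, ∑ j ∈ I.erase (I.max' h), L.get j < A ∧ A ≤ ∑ j ∈ I, L.get j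

theorem List.sum_get_filter_lt {M : Type*} [AddCommMonoid M] (L : List M) (m : ℕ) :
    ∑ j ∈ univ.filter (fun j : Fin L.length => (j : ℕ) < m), L.get j = (L.take m).sum := by
  simpa using (List.sum_take_ofFn L.get m).symm

theorem List.sum_get_le_sum (I : Finset (Fin L.length)) : ∑ j ∈ I, L.get j ≤ L.sum := by
  simpa using Finset.sum_le_sum_of_subset (f := fun j : Fin L.length => L.get j) (subset_univ I)

theorem brackets_filter_lt {m : ℕ} (hm0 : m ≠ 0) (hmL : m ≤ L.length)
    (hlt : (L.take (m - 1)).sum < A) (hle : A ≤ (L.take m).sum) :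
    Brackets L A (univ.filter fun j : Fin L.length => (j : ℕ) < m) := by
  have hlast : (⟨m - 1, by omega⟩ : Fin L.length) ∈
      univ.filter fun j : Fin L.length => (j : ℕ) < m := by
    simp only [mem_filter, mem_univ, true_and]; omega
  have hmax : (univ.filter fun j : Fin L.length => (j : ℕ) < m).max' ⟨_, hlast⟩
      = ⟨m - 1, by omega⟩ := by
    refine le_antisymm (max'_le _ _ _ fun j hj => ?_) (le_max' _ _ hlast)
    simp only [mem_filter, mem_univ, true_and] at hj
    rw [Fin.le_def]
    dsimp only
    omega
  have herase : (univ.filter fun j : Fin L.length => (j : ℕ) < m).erase ⟨m - 1, by omega⟩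
      = univ.filter fun j : Fin L.length => (j : ℕ) < m - 1 := by
    ext j
    simp only [mem_erase, mem_filter, mem_univ, true_and, ne_eq, Fin.ext_iff]
    omega
  refine ⟨⟨_, hlast⟩, ?_, ?_⟩
  · rwa [hmax, herase, List.sum_get_filter_lt]
  · rwa [List.sum_get_filter_lt]

theorem eq_filter_lt_of_brackets {m : ℕ} (hbig : ∀ i (hi : i < L.length),
      (L.take i).sum < A → L.sum < L[i] + A)
    (hlt : ∀ i < m, (L.take i).sum < A) (hle : A ≤ (L.take m).sum) {I : Finset (Fin L.length)}
    (hI : Brackets L A I) : I = univ.filter fun j : Fin L.length => (j : ℕ) < m := by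
  obtain ⟨hne, herase, hsum⟩ := hI
  have hmem : ∀ i : Fin L.length, (i : ℕ) < m → i ∈ I := by
    intro i hi
    by_contra hiI
    have hins := List.sum_get_le_sum (insert i I)
    rw [sum_insert hiI, List.get_eq_getElem] at hins
    have := hbig i i.isLt (hlt i hi)
    omega
  have hlt_m : ∀ j ∈ I, (j : ℕ) < m := by
    intro j hj
    by_contra! hjm
    have hsub : (univ.filter fun i : Fin L.length => (i : ℕ) < m) ⊆ I.erase (I.max' hne) := by
      intro i hi
      simp only [mem_filter, mem_univ, true_and] at hi
      refine mem_erase.2 ⟨fun h => ?_, hmem i hi⟩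
      have := I.le_max' j hj
      rw [← h, Fin.le_def] at this
      omega
    have := sum_le_sum_of_subset (f := fun i : Fin L.length => L.get i) hsub
    rw [List.sum_get_filter_lt] at this
    omega
  ext j
  simp only [mem_filter, mem_univ, true_and]
  exact ⟨hlt_m j, hmem j⟩

theorem exists_forall_brackets_iff (hA : 0 < A) (hAL : A ≤ L.sum)
    (hbig : ∀ i (hi : i < L.length), (L.take i).sum < A → L.sum < L[i] + A) :
    ∃ m, ∀ I, Brackets L A I ↔ I = univ.filter fun j : Fin L.length => (j : ℕ) < m := by
  have hex : ∃ m, A ≤ (L.take m).sum := ⟨L.length, by simpa using hAL⟩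
  have hlt : ∀ i < Nat.find hex, (L.take i).sum < A := fun i hi => not_le.1 (Nat.find_min hex hi)
  have hm0 : Nat.find hex ≠ 0 := fun h => by
    have := Nat.find_spec hex
    simp only [h, List.take_zero, List.sum_nil] at this
    omega
  refine ⟨Nat.find hex, fun I => ⟨eq_filter_lt_of_brackets hbig hlt (Nat.find_spec hex), ?_⟩⟩
  rintro rfl
  exact brackets_filter_lt hm0 (Nat.find_min' hex (by simpa using hAL)) (hlt _ (by omega))
    (Nat.find_spec hex)

end Brackets

/-- with `a₁` the first (largest) entry of `P^in_θ(M)` and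
`b₁ ≥ ⋯ ≥ b_l` the outgoing partition `P^out_θ(M)`, there is a unique subset
`I = {i₁ < ⋯ < i_m}` of indices with `∑_{j<m} b_{i_j} < a₁ ≤ ∑_{j≤m} b_{i_j}`,
and moreover any such subset is an initial segment `{1,…,m}`. -/
theorem pin_pout_unique_initial_segment (θ : ℝ) (hθ : Irrational θ) (M : ℕ)
    (hM : 1 ≤ M) :
    (∃! I : Finset (Fin (poutList θ M).length),
        ∃ h : I.Nonempty,
          (∑ j ∈ I.erase (I.max' h), (poutList θ M).get j) < (pinList θ M).headI ∧
          (pinList θ M).headI ≤ ∑ j ∈ I, (poutList θ M).get j) ∧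
      ∀ I : Finset (Fin (poutList θ M).length),
        (∃ h : I.Nonempty,
          (∑ j ∈ I.erase (I.max' h), (poutList θ M).get j) < (pinList θ M).headI ∧
          (pinList θ M).headI ≤ ∑ j ∈ I, (poutList θ M).get j) →
        ∃ m : ℕ, I = Finset.univ.filter (fun j : Fin (poutList θ M).length => (j : ℕ) < m) := by
  obtain ⟨hA, -, -⟩ := pinStep_spec θ hM
  have hsum : (poutList θ M).sum = M := sum_pinListAux (-θ) le_rfl
  obtain ⟨m, hm⟩ := exists_forall_brackets_iff (L := poutList θ M) hA.1 (by rw [hsum]; exact hA.2)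
    (by rw [hsum]; exact lt_getElem_pinListAux_neg_add hθ le_rfl hA (pinStep_isMaxOn hθ hM))
  rw [headI_pinList θ hM]
  exact ⟨⟨_, (hm _).2 rfl, fun I hI => (hm I).1 hI⟩, fun I hI => ⟨m, (hm I).1 hI⟩⟩
end

section
/- Let γ be a nondegenerate elliptic Reeb orbit with monodromy angle θ (irrational), so that CZ_τ(γ^m) = 2⌊mθ⌋ + 1 for each positive integer m. Let u be a degree-M branched cover of the cylinder over γ with connected genus-g domain, positive ends of multiplicities a₁,…,a_k and negative ends of multiplicities b₁,…,b_l (∑aᵢ = ∑bⱼ = M). Then the Fredholm index ind(u) = −χ(C) + ∑ᵢ CZ_τ(γ^{aᵢ}) − ∑ⱼ CZ_τ(γ^{bⱼ}) satisfies ind(u) = 2g + 2(∑ᵢ⌈aᵢθ⌉ − ∑ⱼ⌊bⱼθ⌋ − 1). In particular ind(u) ≥ 0, with equality only if g = 0. -/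
/-! Since `θ` is irrational, so is every `mθ` with `m ≠ 0`; hence `⌈aᵢθ⌉ = ⌊aᵢθ⌋ + 1`, and the
`+1` in each `CZ(aᵢ)` together with the `k` in `−χ` turns the floors at the positive ends into
ceilings, which gives the index formula. Nonnegativity is superadditivity of the ceiling and
subadditivity of the floor across `Mθ`:
`∑ ⌊bⱼθ⌋ ≤ ⌊Mθ⌋ < ⌈Mθ⌉ ≤ ∑ ⌈aᵢθ⌉`, the middle inequality again by irrationality. -/

open Finset

theorem Irrational.ceil_eq_floor_add_one {x : ℝ} (hx : Irrational x) : ⌈x⌉ = ⌊x⌋ + 1 :=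
  (Int.ceil_eq_floor_add_one_iff_notMem x).mpr fun ⟨m, hm⟩ => hx.ne_int m hm.symm

section FloorSum

variable {R ι : Type*} [Ring R] [LinearOrder R] [IsStrictOrderedRing R] [FloorRing R]

theorem Int.sum_floor_le_floor_sum (s : Finset ι) (f : ι → R) :
    ∑ i ∈ s, ⌊f i⌋ ≤ ⌊∑ i ∈ s, f i⌋ :=
  Int.le_floor.mpr <| by push_cast; exact sum_le_sum fun i _ => Int.floor_le _

theorem Int.ceil_sum_le_sum_ceil (s : Finset ι) (f : ι → R) :
    ⌈∑ i ∈ s, f i⌉ ≤ ∑ i ∈ s, ⌈f i⌉ :=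
  Int.ceil_le.mpr <| by push_cast; exact sum_le_sum fun i _ => Int.le_ceil _

end FloorSum

theorem sum_ceil_eq_sum_floor_add_card_of_irrational {ι : Type*} {s : Finset ι} {x : ι → ℝ}
    (hx : ∀ i ∈ s, Irrational (x i)) : ∑ i ∈ s, ⌈x i⌉ = ∑ i ∈ s, ⌊x i⌋ + #s := by
  rw [sum_congr rfl fun i hi => (hx i hi).ceil_eq_floor_add_one, sum_add_distrib]
  simp

theorem Irrational.sum_floor_natCast_mul_lt_sum_ceil_natCast_mul {θ : ℝ} (hθ : Irrational θ)
    {ι κ : Type*} {s : Finset ι} {t : Finset κ} {a : ι → ℕ} {b : κ → ℕ}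
    (hab : ∑ i ∈ s, a i = ∑ j ∈ t, b j) (hne : ∑ i ∈ s, a i ≠ 0) :
    ∑ j ∈ t, ⌊(b j : ℝ) * θ⌋ < ∑ i ∈ s, ⌈(a i : ℝ) * θ⌉ := by
  set M := ∑ i ∈ s, a i
  have hMa : ∑ i ∈ s, (a i : ℝ) * θ = M * θ := by push_cast [M, sum_mul]; rfl
  have hMb : ∑ j ∈ t, (b j : ℝ) * θ = M * θ := by rw [hab]; push_cast [sum_mul]; rfl
  calc ∑ j ∈ t, ⌊(b j : ℝ) * θ⌋
      ≤ ⌊(M : ℝ) * θ⌋ := hMb ▸ Int.sum_floor_le_floor_sum t _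
    _ < ⌈(M : ℝ) * θ⌉ := by rw [(hθ.natCast_mul hne).ceil_eq_floor_add_one]; omega
    _ ≤ ∑ i ∈ s, ⌈(a i : ℝ) * θ⌉ := hMa ▸ Int.ceil_sum_le_sum_ceil s _

theorem branched_cover_index_general (θ : ℝ) (hθ : Irrational θ) (g k l M : ℕ)
    (hk : 1 ≤ k)
    (a : Fin k → ℕ) (b : Fin l → ℕ) (ha : ∀ i, 0 < a i)
    (hsa : ∑ i, a i = M) (hsb : ∑ j, b j = M) :
    (-(2 - 2 * (g : ℤ) - (k : ℤ) - (l : ℤ)) +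
        (∑ i, (2 * ⌊(a i : ℝ) * θ⌋ + 1)) - (∑ j, (2 * ⌊(b j : ℝ) * θ⌋ + 1))
      = 2 * (g : ℤ) + 2 * ((∑ i, ⌈(a i : ℝ) * θ⌉) - (∑ j, ⌊(b j : ℝ) * θ⌋) - 1)) ∧
    (0 ≤ -(2 - 2 * (g : ℤ) - (k : ℤ) - (l : ℤ)) +
        (∑ i, (2 * ⌊(a i : ℝ) * θ⌋ + 1)) - (∑ j, (2 * ⌊(b j : ℝ) * θ⌋ + 1))) ∧
    ((-(2 - 2 * (g : ℤ) - (k : ℤ) - (l : ℤ)) +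
        (∑ i, (2 * ⌊(a i : ℝ) * θ⌋ + 1)) - (∑ j, (2 * ⌊(b j : ℝ) * θ⌋ + 1)) = 0) →
      g = 0) := by
  have hcz : ∀ {n : ℕ} (f : Fin n → ℤ), ∑ i, (2 * f i + 1) = 2 * ∑ i, f i + n := by
    simp [sum_add_distrib, mul_sum]
  have hceil : ∑ i, ⌈(a i : ℝ) * θ⌉ = ∑ i, ⌊(a i : ℝ) * θ⌋ + k := by
    simpa using sum_ceil_eq_sum_floor_add_card_of_irrational (s := univ)
      fun i _ => hθ.natCast_mul (ha i).ne'
  have hM : ∑ i, a i ≠ 0 := (sum_pos (fun i _ => ha i) ⟨⟨0, hk⟩, mem_univ _⟩).ne'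
  have hlt := hθ.sum_floor_natCast_mul_lt_sum_ceil_natCast_mul (hsa.trans hsb.symm) hM
  rw [hcz, hcz, hceil]
  rw [hceil] at hlt
  exact ⟨by ring, by omega, by omega⟩

/-- for a connected genus-`g` branched cover of a cylinder over an
elliptic orbit with monodromy angle `θ`, with positive ends of multiplicities
`a₁,…,a_k` and negative ends `b₁,…,b_l` (each summing to `M`), the Fredholm index
`ind = −χ + ∑ CZ(aᵢ) − ∑ CZ(bⱼ)`, with `χ = 2−2g−k−l` and `CZ(m) = 2⌊mθ⌋+1`,
satisfies `ind = 2g + 2(∑⌈aᵢθ⌉ − ∑⌊bⱼθ⌋ − 1)`; in particular `ind ≥ 0`, with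
equality only if `g = 0`. -/
theorem branched_cover_index (θ : ℝ) (hθ : Irrational θ) (g k l M : ℕ)
    (hk : 1 ≤ k) (hl : 1 ≤ l)
    (a : Fin k → ℕ) (b : Fin l → ℕ) (ha : ∀ i, 0 < a i) (hb : ∀ j, 0 < b j)
    (hsa : ∑ i, a i = M) (hsb : ∑ j, b j = M) :
    (-(2 - 2 * (g : ℤ) - (k : ℤ) - (l : ℤ)) +
        (∑ i, (2 * ⌊(a i : ℝ) * θ⌋ + 1)) - (∑ j, (2 * ⌊(b j : ℝ) * θ⌋ + 1))
      = 2 * (g : ℤ) + 2 * ((∑ i, ⌈(a i : ℝ) * θ⌉) - (∑ j, ⌊(b j : ℝ) * θ⌋) - 1)) ∧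
    (0 ≤ -(2 - 2 * (g : ℤ) - (k : ℤ) - (l : ℤ)) +
        (∑ i, (2 * ⌊(a i : ℝ) * θ⌋ + 1)) - (∑ j, (2 * ⌊(b j : ℝ) * θ⌋ + 1))) ∧
    ((-(2 - 2 * (g : ℤ) - (k : ℤ) - (l : ℤ)) +
        (∑ i, (2 * ⌊(a i : ℝ) * θ⌋ + 1)) - (∑ j, (2 * ⌊(b j : ℝ) * θ⌋ + 1)) = 0) →
      g = 0) :=
  branched_cover_index_general θ hθ g k l M hk a b ha hsa hsb
end
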